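/- arXiv:1511.05783 — 2 statements merged into one kernel-verified Lean document; each statement's English description precedes it below -/
import Mathlib

section
/- Let R be an algebra of type (𝒢, m, n), where s is the maximal cardinality of a gee. Then zcl(R) ≤ 2s + 2. -/
open scoped TensorProduct

/-- `[k] = {1,…,k}` as a finset of positive integers. -/
def bra (k : ℕ) : Finset ℕ+ := (Finset.range k).image (fun i => ⟨i + 1, i.succ_pos⟩)

/-- The domination order on finite multisets of positive integers: `MLE S T` holds iff there
is a submultiset `T'` of `T` that can be matched up with `S` so that each element of `S` is
at most its partner in `T'`. -/
def MLE (S T : Multiset ℕ+) : Prop := ∃ T' ≤ T, Multiset.Rel (· ≤ ·) S T'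

/-- `S` is a subgee of the collection `𝒢` of gees. -/
def Subgee (𝒢 : Finset (Finset ℕ+)) (S : Finset ℕ+) : Prop := ∃ G ∈ 𝒢, MLE S.val G.val

/-- `rho i T` is the number of elements of `T` greater than `i`. -/
def rho (i : ℕ+) (T : Finset ℕ+) : ℕ := (T.filter (fun t => i < t)).card

/-- The ordered monomial `V_S = V_{s₁} ⋯ V_{s_k}` for `S = {s₁ < ⋯ < s_k}`. -/
def VSmon {R : Type} [Ring R] (V : ℕ+ → R) (S : Finset ℕ+) : R :=
  ((S.sort (· ≤ ·)).map V).prod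

/-- An algebra of type `(𝒢, m, n)`. -/
structure IsPolygonAlgebra (n m : ℕ) (𝒢 : Finset (Finset ℕ+))
    (R : Type) [Ring R] [Algebra ℚ R] [FiniteDimensional ℚ R]
    (𝒜 : ℕ → Submodule ℚ R) [GradedAlgebra 𝒜]
    (V : ℕ+ → R) (W : Finset ℕ+ → R) : Prop where
  hn : 4 ≤ n
  hm : 1 ≤ m
  gee_nonempty : 𝒢.Nonempty
  gee_sub : ∀ G ∈ 𝒢, G ⊆ bra (n - 1)
  gee_incomp : ∀ G ∈ 𝒢, ∀ G' ∈ 𝒢, MLE G.val G'.val → G = G'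
  gee_card : ∀ G ∈ 𝒢, G.card ≤ m - 1
  gcomm : ∀ (i j : ℕ) (x y : R), x ∈ 𝒜 i → y ∈ 𝒜 j →
    x * y = ((-1 : ℚ)) ^ (i * j) • (y * x)
  V_mem : ∀ i : ℕ+, (i : ℕ) ≤ n - 1 → V i ∈ 𝒜 1
  W_mem : ∀ S : Finset ℕ+, Subgee 𝒢 S → W S ∈ 𝒜 (m - S.card)
  VS_ne : ∀ S : Finset ℕ+, S ⊆ bra (n - 1) → (VSmon V S ≠ 0 ↔ Subgee 𝒢 S)
  basis_indep : LinearIndependent ℚ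
    (Sum.elim (fun S : {S : Finset ℕ+ // Subgee 𝒢 S} => VSmon V S.1)
      (fun S : {S : Finset ℕ+ // Subgee 𝒢 S} => W S.1))
  basis_span : Submodule.span ℚ (Set.range
    (Sum.elim (fun S : {S : Finset ℕ+ // Subgee 𝒢 S} => VSmon V S.1)
      (fun S : {S : Finset ℕ+ // Subgee 𝒢 S} => W S.1))) = ⊤
  VW : ∀ S S' : Finset ℕ+, Subgee 𝒢 S → Subgee 𝒢 S' → S.card = S'.card →
    VSmon V S * W S' = if S = S' then W ∅ else 0
  WW : ∀ S S' : Finset ℕ+, Subgee 𝒢 S → Subgee 𝒢 S' → S.card + S'.card = m →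
    W S * W S' = 0

/-- `R` has no exotic products. -/
def NoExoticProducts (n : ℕ) (𝒢 : Finset (Finset ℕ+))
    {R : Type} [Ring R] [Algebra ℚ R] (V : ℕ+ → R) (W : Finset ℕ+ → R) : Prop :=
  (∀ S S' : Finset ℕ+, Subgee 𝒢 S → Subgee 𝒢 S' → W S * W S' = 0) ∧
  (∀ i : ℕ+, (i : ℕ) ≤ n - 1 → ∀ S : Finset ℕ+, Subgee 𝒢 S →
    (i ∈ S → V i * W S = ((-1 : ℚ)) ^ (rho i (S.erase i)) • W (S.erase i)) ∧
    (i ∉ S → V i * W S = 0))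

section Tensor

variable {R : Type} [Ring R] [Algebra ℚ R] (𝒜 : ℕ → Submodule ℚ R) [GradedAlgebra 𝒜]

/-- The multiplication map `μ : R ⊗̂ R → R`. -/
noncomputable def muMap : (𝒜 ᵍ⊗[ℚ] 𝒜) →ₗ[ℚ] R :=
  (LinearMap.mul' ℚ R).comp (GradedTensorProduct.of ℚ 𝒜 𝒜).symm.toLinearMap

/-- `x ⊗ y` as an element of the graded tensor product `R ⊗̂ R`. -/
noncomputable def tm (x y : R) : 𝒜 ᵍ⊗[ℚ] 𝒜 := GradedTensorProduct.of ℚ 𝒜 𝒜 (x ⊗ₜ y)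

/-- `ū = u ⊗ 1 - 1 ⊗ u`. -/
noncomputable def ubar (u : R) : 𝒜 ᵍ⊗[ℚ] 𝒜 := tm 𝒜 u 1 - tm 𝒜 1 u

/-- `V̄_D = ∏_{i ∈ D} V̄ᵢ` with factors in increasing order of `i`. -/
noncomputable def Vbar (V : ℕ+ → R) (D : Finset ℕ+) : 𝒜 ᵍ⊗[ℚ] 𝒜 :=
  ((D.sort (· ≤ ·)).map (fun i => ubar 𝒜 (V i))).prod

/-- The set of `k` such that some product of `k` zero divisors in `R ⊗̂ R` is nonzero;
`zcl R` is the greatest element of this set. -/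
def zclSet : Set ℕ :=
  {k : ℕ | ∃ L : List (𝒜 ᵍ⊗[ℚ] 𝒜), L.length = k ∧
    (∀ x ∈ L, muMap 𝒜 x = 0) ∧ L.prod ≠ 0}

end Tensor

/-!
Let `I ⊆ R` be the span of the basis elements of positive degree, `V_S` (`S ≠ ∅`) and `W_S`, so
that `R = ℚ·1 + I`. Then `I ^ (s + 2) = 0`: a product of `s + 2` such elements either contains
some `W_S`, and then its degree exceeds the top degree `m`, or it is, up to sign, a product of
more than `s` generators `V_i`, which vanishes because `V_i² = 0` and `V_T = 0` for `|T| > s`.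

In `R ⊗̂ R` put `X = I ⊗ 1` and `Y = 1 ⊗ I`. Every zero divisor lies in
`X + Y + X Y = X (1 + Y) + Y`; the Koszul sign rule makes `X` and `Y` commute as subspaces, so this
is a sum of two commuting subspaces that are nilpotent of order `s + 2`, and its `(2s + 3)`-rd
power vanishes.
-/

open Submodule
open scoped Pointwise

def SignCommute {A : Type*} [Ring A] (x y : A) : Prop := x * y = y * x ∨ x * y = -(y * x)

section SignCommute

variable {A : Type*} [Ring A]

theorem SignCommute.symm {x y : A} (h : SignCommute x y) : SignCommute y x :=
  h.imp Eq.symm fun e => by rw [e, neg_neg]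

theorem List.Perm.prod_eq_or_eq_neg {P : Set A} (hP : ∀ x ∈ P, ∀ y ∈ P, SignCommute x y)
    {l₁ l₂ : List A} (h : l₁.Perm l₂) (hl : ∀ x ∈ l₁, x ∈ P) :
    l₁.prod = l₂.prod ∨ l₁.prod = -l₂.prod := by
  induction h with
  | nil => exact .inl rfl
  | cons x _ ih =>
    rcases ih fun y hy => hl y (List.mem_cons_of_mem x hy) with e | e <;>
      simp only [List.prod_cons, e, mul_neg, true_or, or_true]
  | swap x y l =>
    simp only [List.prod_cons, ← mul_assoc]
    rcases hP y (hl y (by simp)) x (hl x (by simp)) with e | e <;>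
      simp only [e, neg_mul, true_or, or_true]
  | trans h₁₂ _ ih₁ ih₂ =>
    have h₂ := ih₂ fun y hy => hl y (h₁₂.mem_iff.mpr hy)
    rcases ih₁ hl with e | e <;> rcases h₂ with e' | e' <;> simp [e, e']

theorem Submodule.span_mul_span_le_of_signCommute {R : Type*} [CommRing R] [Algebra R A]
    {S T : Set A} (h : ∀ s ∈ S, ∀ t ∈ T, SignCommute s t) :
    span R S * span R T ≤ span R T * span R S := by
  rw [span_mul_span, span_mul_span, span_le]
  rintro _ ⟨s, hs, t, ht, rfl⟩
  have hts : t * s ∈ span R (T * S) := subset_span ⟨t, ht, s, hs, rfl⟩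
  rcases h s hs t ht with e | e <;> simp only [e]
  exacts [hts, neg_mem hts]

theorem Submodule.commute_span_of_signCommute {R : Type*} [CommRing R] [Algebra R A]
    {S T : Set A} (h : ∀ s ∈ S, ∀ t ∈ T, SignCommute s t) : Commute (span R S) (span R T) :=
  le_antisymm (span_mul_span_le_of_signCommute h)
    (span_mul_span_le_of_signCommute fun t ht s hs => (h s hs t ht).symm)

theorem Submodule.list_prod_mem_pow {R : Type*} [CommSemiring R] [Algebra R A] {M : Submodule R A}
    {L : List A} (hL : ∀ x ∈ L, x ∈ M) : L.prod ∈ M ^ L.length := by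
  induction L with
  | nil => exact mem_one.mpr ⟨1, map_one _⟩
  | cons x L ih =>
    rw [List.prod_cons, List.length_cons, pow_succ']
    exact mul_mem_mul (hL x (by simp)) (ih fun y hy => hL y (List.mem_cons_of_mem x hy))

end SignCommute

section GradedCommutative

variable {R : Type*} [Ring R] [Algebra ℚ R]

def GradedCommutative (𝒜 : ℕ → Submodule ℚ R) : Prop :=
  ∀ (i j : ℕ) (x y : R), x ∈ 𝒜 i → y ∈ 𝒜 j → x * y = (-1 : ℚ) ^ (i * j) • (y * x)

variable {𝒜 : ℕ → Submodule ℚ R}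

theorem GradedCommutative.signCommute (h𝒜 : GradedCommutative 𝒜) {i j : ℕ} {x y : R}
    (hx : x ∈ 𝒜 i) (hy : y ∈ 𝒜 j) : SignCommute x y := by
  rw [SignCommute, h𝒜 i j x y hx hy]
  rcases neg_one_pow_eq_or ℚ (i * j) with e | e <;> rw [e]
  exacts [.inl (one_smul _ _), .inr (neg_one_smul _ _)]

theorem GradedCommutative.mul_self_eq_zero (h𝒜 : GradedCommutative 𝒜) {x : R} (hx : x ∈ 𝒜 1) :
    x * x = 0 := by
  have := IsAddTorsionFree.of_module_rat (M := R)
  have hxx := h𝒜 1 1 x x hx hx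
  rwa [mul_one, pow_one, neg_one_smul, self_eq_neg] at hxx

end GradedCommutative

section GradedProjection

variable {K R : Type*} [CommSemiring K] [Semiring R] [Algebra K R] (𝒜 : ℕ → Submodule K R)
  [GradedAlgebra 𝒜]

theorem span_le_ker_proj {H : Set R} {d : ℕ} (hH : ∀ h ∈ H, ∃ e ≠ d, h ∈ 𝒜 e) :
    span K H ≤ LinearMap.ker (GradedAlgebra.proj 𝒜 d) := by
  rw [span_le]
  intro h hh
  obtain ⟨e, hed, he⟩ := hH h hh
  simp [GradedAlgebra.proj_apply, DirectSum.decompose_of_mem_ne 𝒜 he hed]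

theorem eq_zero_of_mem_graded_of_lt {B : Set R} (hB : span K B = ⊤) {m d : ℕ}
    (hdeg : ∀ b ∈ B, ∃ e ≤ m, b ∈ 𝒜 e) (hd : m < d) {x : R} (hx : x ∈ 𝒜 d) : x = 0 := by
  have hker := span_le_ker_proj 𝒜 (d := d) fun b hb => by
    obtain ⟨e, hem, he⟩ := hdeg b hb
    exact ⟨e, by omega, he⟩
  have : GradedAlgebra.proj 𝒜 d x = 0 := hker (hB ▸ mem_top)
  rwa [GradedAlgebra.proj_apply, DirectSum.decompose_of_mem_same 𝒜 hx] at this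

end GradedProjection

section TensorProduct

open GradedTensorProduct

variable {R : Type} [Ring R] [Algebra ℚ R] {𝒜 : ℕ → Submodule ℚ R} [GradedAlgebra 𝒜]

theorem muMap_tmul (x y : R) : muMap 𝒜 (x ᵍ⊗ₜ[ℚ] y) = x * y :=
  LinearMap.mul'_apply

theorem muMap_includeLeft (x : R) : muMap 𝒜 (includeLeft 𝒜 𝒜 x) = x := by
  rw [includeLeft_apply, muMap_tmul, mul_one]

theorem signCommute_includeLeft_includeRight {a b : R} {i j : ℕ} (ha : a ∈ 𝒜 i) (hb : b ∈ 𝒜 j) :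
    SignCommute (includeLeft 𝒜 𝒜 a) (includeRight 𝒜 𝒜 b) := by
  have koszul := tmul_coe_mul_coe_tmul 𝒜 𝒜 (1 : R) ⟨b, hb⟩ ⟨a, ha⟩ (1 : R)
  simp only [one_mul, mul_one] at koszul
  rw [SignCommute, includeLeft_apply, includeRight_apply, tmul_one_mul_one_tmul, koszul]
  rcases Int.units_eq_one_or ((-1 : ℤˣ) ^ (j * i)) with e | e <;> rw [e]
  · exact .inl (one_smul _ _).symm
  · exact .inr (by rw [Units.neg_smul, one_smul, neg_neg])

theorem commute_map_includeLeft_map_includeRight {H₁ H₂ : Set R}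
    (h₁ : ∀ a ∈ H₁, ∃ i, a ∈ 𝒜 i) (h₂ : ∀ b ∈ H₂, ∃ j, b ∈ 𝒜 j) :
    Commute ((span ℚ H₁).map (includeLeft 𝒜 𝒜).toLinearMap)
      ((span ℚ H₂).map (includeRight 𝒜 𝒜).toLinearMap) := by
  rw [map_span, map_span]
  refine commute_span_of_signCommute ?_
  rintro _ ⟨a, ha, rfl⟩ _ ⟨b, hb, rfl⟩
  obtain ⟨i, hi⟩ := h₁ a ha
  obtain ⟨j, hj⟩ := h₂ b hb
  exact signCommute_includeLeft_includeRight hi hj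

variable {H : Set R} (hH : ∀ h ∈ H, ∃ d, 0 < d ∧ h ∈ 𝒜 d) (hspan : span ℚ (insert 1 H) = ⊤)
include hH hspan

theorem ker_muMap_le :
    LinearMap.ker (muMap 𝒜) ≤ (span ℚ H).map (includeLeft 𝒜 𝒜).toLinearMap
      + (span ℚ H).map (includeRight 𝒜 𝒜).toLinearMap
      + (span ℚ H).map (includeLeft 𝒜 𝒜).toLinearMap
        * (span ℚ H).map (includeRight 𝒜 𝒜).toLinearMap := by
  set X := (span ℚ H).map (includeLeft 𝒜 𝒜).toLinearMap
  set Y := (span ℚ H).map (includeRight 𝒜 𝒜).toLinearMap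
  have hI : 1 + span ℚ H = ⊤ := by
    rw [← hspan, span_insert, one_eq_span, Submodule.add_eq_sup]
  have hX : 1 + X = (⊤ : Submodule ℚ R).map (includeLeft 𝒜 𝒜).toLinearMap := by
    rw [← hI, Submodule.add_eq_sup, Submodule.add_eq_sup, Submodule.map_sup, Submodule.map_one]
  have hY : 1 + Y = (⊤ : Submodule ℚ R).map (includeRight 𝒜 𝒜).toLinearMap := by
    rw [← hI, Submodule.add_eq_sup, Submodule.add_eq_sup, Submodule.map_sup, Submodule.map_one]
  have htop : ⊤ ≤ 1 + (X + Y + X * Y) := by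
    have : (1 + X) * (1 + Y) = 1 + (X + Y + X * Y) := by
      rw [add_mul, mul_add, mul_add, one_mul, one_mul, mul_one]; abel
    rw [← this, hX, hY]
    rintro z -
    obtain ⟨t, rfl⟩ := (of ℚ 𝒜 𝒜).surjective z
    induction t using TensorProduct.induction_on with
    | zero => rw [map_zero]; exact zero_mem _
    | tmul a b =>
      rw [← tmul, ← tmul_one_mul_one_tmul, ← includeLeft_apply, ← includeRight_apply]
      exact mul_mem_mul (mem_map_of_mem mem_top) (mem_map_of_mem mem_top)
    | add x y hx hy => rw [map_add]; exact add_mem hx hy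
  -- Write `z = c + j` with `j ∈ X + Y + X * Y`; the degree-zero part of `μ z = 0` is `c`.
  have hker0 := span_le_ker_proj 𝒜 fun h hh =>
    let ⟨d, hd, hmem⟩ := hH h hh; ⟨d, hd.ne', hmem⟩
  set φ := GradedAlgebra.proj 𝒜 0 ∘ₗ muMap 𝒜
  have hJ : X + Y + X * Y ≤ LinearMap.ker φ := by
    simp only [Submodule.add_eq_sup, sup_le_iff]
    refine ⟨⟨?_, ?_⟩, mul_le.mpr ?_⟩
    · rintro _ ⟨a, ha, rfl⟩
      simpa [φ, muMap_tmul] using hker0 ha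
    · rintro _ ⟨b, hb, rfl⟩
      simpa [φ, muMap_tmul] using hker0 hb
    · rintro _ ⟨a, ha, rfl⟩ _ ⟨b, hb, rfl⟩
      have hpa : GradedRing.projZeroRingHom 𝒜 a = 0 := hker0 ha
      have hpb : GradedRing.projZeroRingHom 𝒜 b = 0 := hker0 hb
      simpa [φ, tmul_one_mul_one_tmul, muMap_tmul, hpa, hpb] using
        map_mul (GradedRing.projZeroRingHom 𝒜) a b
  intro z hz
  have hz' : z ∈ 1 ⊔ (X + Y + X * Y) := by
    rw [← Submodule.add_eq_sup]; exact htop mem_top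
  obtain ⟨_, hc, j, hj, rfl⟩ := mem_sup.mp hz'
  obtain ⟨c, rfl⟩ := mem_one.mp hc
  rw [← (includeLeft 𝒜 𝒜).commutes] at hz ⊢
  have hc0 : algebraMap ℚ R c = 0 := by
    have hφz : φ (includeLeft 𝒜 𝒜 (algebraMap ℚ R c) + j) = 0 := by
      simp only [φ, LinearMap.comp_apply, LinearMap.mem_ker.mp hz, map_zero]
    rwa [map_add, LinearMap.mem_ker.mp (hJ hj), add_zero, LinearMap.comp_apply,
      muMap_includeLeft, GradedAlgebra.proj_apply,
      DirectSum.decompose_of_mem_same 𝒜 (SetLike.algebraMap_mem_graded 𝒜 c)] at hφz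
  rwa [hc0, map_zero, zero_add]

theorem list_prod_eq_zero_of_forall_muMap_eq_zero {N : ℕ} (hN : span ℚ H ^ N = ⊥)
    {L : List (𝒜 ᵍ⊗[ℚ] 𝒜)} (hL : ∀ x ∈ L, muMap 𝒜 x = 0) (hlen : 2 * N ≤ L.length + 1) :
    L.prod = 0 := by
  set X := (span ℚ H).map (includeLeft 𝒜 𝒜).toLinearMap
  set Y := (span ℚ H).map (includeRight 𝒜 𝒜).toLinearMap
  have hhom : ∀ h ∈ H, ∃ d, h ∈ 𝒜 d := fun h hh => (hH h hh).imp fun _ => And.right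
  have hXY : Commute X Y := commute_map_includeLeft_map_includeRight hhom hhom
  have hX : X ^ N = 0 := by rw [← Submodule.map_pow, hN, Submodule.map_bot, zero_eq_bot]
  have hY : Y ^ N = 0 := by rw [← Submodule.map_pow, hN, Submodule.map_bot, zero_eq_bot]
  have hP : (X * (1 + Y)) ^ N = 0 := by
    rw [((Commute.one_right X).add_right hXY).mul_pow, hX, zero_mul]
  have hPY : Commute (X * (1 + Y)) Y :=
    hXY.mul_left ((Commute.one_left Y).add_left (Commute.refl Y))
  have hJ : (X + Y + X * Y) ^ L.length = 0 := by
    rw [show X + Y + X * Y = X * (1 + Y) + Y by rw [mul_add, mul_one, add_right_comm]]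
    exact hPY.add_pow_eq_zero_of_add_le_succ_of_pow_eq_zero hP hY (by omega)
  have hmem := list_prod_mem_pow fun x hx =>
    ker_muMap_le hH hspan (LinearMap.mem_ker.mpr (hL x hx))
  rwa [hJ, zero_eq_bot, mem_bot] at hmem

end TensorProduct

section Subgee

theorem mem_bra {i : ℕ+} {k : ℕ} : i ∈ bra k ↔ (i : ℕ) ≤ k := by
  rw [show bra k = (Finset.range k).image Nat.succPNat from rfl, Finset.mem_image]
  constructor
  · rintro ⟨a, ha, rfl⟩
    simpa using ha
  · intro hi
    have := i.pos
    refine ⟨(i : ℕ) - 1, Finset.mem_range.mpr (by omega), PNat.eq ?_⟩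
    rw [Nat.succPNat_coe]
    omega

variable {𝒢 : Finset (Finset ℕ+)} {S : Finset ℕ+}

theorem Subgee.subset_bra {k : ℕ} (hG : ∀ G ∈ 𝒢, G ⊆ bra k) (hS : Subgee 𝒢 S) : S ⊆ bra k := by
  obtain ⟨G, hG𝒢, T, hTG, hST⟩ := hS
  intro a ha
  obtain ⟨b, hbT, hab⟩ := Multiset.exists_mem_of_rel_of_mem hST ha
  exact mem_bra.mpr ((PNat.coe_le_coe a b).mpr hab |>.trans
    (mem_bra.mp (hG G hG𝒢 (Multiset.mem_of_le hTG hbT))))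

theorem Subgee.card_le_sup (hS : Subgee 𝒢 S) : S.card ≤ 𝒢.sup Finset.card := by
  obtain ⟨G, hG𝒢, T, hTG, hST⟩ := hS
  calc S.card = Multiset.card T := Multiset.card_eq_card_of_rel hST
    _ ≤ G.card := Multiset.card_le_card hTG
    _ ≤ 𝒢.sup Finset.card := Finset.le_sup hG𝒢

/-- Indices of the basis elements of positive degree: `V_S` for `S ≠ ∅`, and all `W_S`. -/
abbrev PosIndex (𝒢 : Finset (Finset ℕ+)) : Type :=
  {S : Finset ℕ+ // Subgee 𝒢 S ∧ S.Nonempty} ⊕ {S : Finset ℕ+ // Subgee 𝒢 S}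

def posBasis {R : Type} [Ring R] (V : ℕ+ → R) (W : Finset ℕ+ → R) : PosIndex 𝒢 → R :=
  Sum.elim (fun S => VSmon V S.1) (fun S => W S.1)

def posDegree (m : ℕ) : PosIndex 𝒢 → ℕ :=
  Sum.elim (fun S => S.1.card) (fun S => m - S.1.card)

end Subgee

namespace IsPolygonAlgebra

variable {n m : ℕ} {𝒢 : Finset (Finset ℕ+)} {R : Type} [Ring R] [Algebra ℚ R]
  [FiniteDimensional ℚ R] {𝒜 : ℕ → Submodule ℚ R} [GradedAlgebra 𝒜] {V : ℕ+ → R}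
  {W : Finset ℕ+ → R} (h : IsPolygonAlgebra n m 𝒢 R 𝒜 V W)
include h

theorem gradedCommutative : GradedCommutative 𝒜 := h.gcomm

theorem sup_card_lt : 𝒢.sup Finset.card < m := by
  have := Finset.sup_le h.gee_card
  have := h.hm
  omega

theorem card_lt_of_subgee {S : Finset ℕ+} (hS : Subgee 𝒢 S) : S.card < m :=
  hS.card_le_sup.trans_lt h.sup_card_lt

theorem list_prod_V_eq_zero {l : List ℕ+} (hl : ∀ i ∈ l, (i : ℕ) ≤ n - 1)
    (hlen : 𝒢.sup Finset.card < l.length) : (l.map V).prod = 0 := by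
  have hV : ∀ x ∈ l.map V, x ∈ (𝒜 1 : Set R) := by
    simpa using fun i hi => h.V_mem i (hl i hi)
  have of_perm : ∀ l', l.Perm l' → (l'.map V).prod = 0 → (l.map V).prod = 0 := by
    intro l' hll' h0
    rcases (hll'.map V).prod_eq_or_eq_neg
      (fun x hx y hy => h.gradedCommutative.signCommute hx hy) hV with e | e <;> simp [e, h0]
  by_cases hnd : l.Nodup
  · refine of_perm _ (List.perm_of_nodup_nodup_toFinset_eq hnd (Finset.sort_nodup _ (· ≤ ·))
      (Finset.sort_toFinset _ _).symm) (not_not.mp fun hne => ?_)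
    have hsub : l.toFinset ⊆ bra (n - 1) := fun i hi =>
      mem_bra.mpr (hl i (List.mem_toFinset.mp hi))
    have := ((h.VS_ne _ hsub).mp hne).card_le_sup
    rw [List.toFinset_card_of_nodup hnd] at this
    omega
  · obtain ⟨x, hdup⟩ := List.exists_duplicate_iff_not_nodup.mpr hnd
    obtain ⟨t, ht⟩ := (List.duplicate_iff_sublist.mp hdup).exists_perm_append
    refine of_perm _ ht ?_
    rw [List.cons_append, List.cons_append, List.map_cons, List.map_cons, List.prod_cons,
      List.prod_cons, ← mul_assoc,
      h.gradedCommutative.mul_self_eq_zero (h.V_mem x (hl x hdup.mem)), zero_mul]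

theorem VSmon_mem {S : Finset ℕ+} (hS : Subgee 𝒢 S) : VSmon V S ∈ 𝒜 S.card := by
  have := SetLike.list_prod_map_mem_graded (A := 𝒜) (S.sort (· ≤ ·)) (fun _ => 1) V
    fun i hi => h.V_mem i (mem_bra.mp (hS.subset_bra h.gee_sub ((Finset.mem_sort _).mp hi)))
  simpa [VSmon] using this

theorem posBasis_mem (i : PosIndex 𝒢) : posBasis V W i ∈ 𝒜 (posDegree m i) := by
  rcases i with ⟨S, hS, -⟩ | ⟨S, hS⟩
  exacts [h.VSmon_mem hS, h.W_mem S hS]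

theorem posDegree_pos (i : PosIndex 𝒢) : 0 < posDegree m i := by
  rcases i with ⟨S, -, hne⟩ | ⟨S, hS⟩
  · exact hne.card_pos
  · exact Nat.sub_pos_of_lt (h.card_lt_of_subgee hS)

theorem span_insert_one_range_posBasis :
    span ℚ (insert 1 (Set.range (posBasis V W : PosIndex 𝒢 → R))) = ⊤ := by
  refine top_le_iff.mp (h.basis_span ▸ span_mono ?_)
  rintro _ ⟨⟨S, hS⟩ | ⟨S, hS⟩, rfl⟩
  · rcases S.eq_empty_or_nonempty with rfl | hne
    · exact .inl (by simp [VSmon])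
    · exact .inr ⟨.inl ⟨S, hS, hne⟩, rfl⟩
  · exact .inr ⟨.inr ⟨S, hS⟩, rfl⟩

theorem eq_zero_of_mem_of_lt {d : ℕ} (hd : m < d) {x : R} (hx : x ∈ 𝒜 d) : x = 0 := by
  refine eq_zero_of_mem_graded_of_lt 𝒜 h.span_insert_one_range_posBasis ?_ hd hx
  rintro _ (rfl | ⟨⟨S, hS, -⟩ | ⟨S, hS⟩, rfl⟩)
  · exact ⟨0, Nat.zero_le _, SetLike.one_mem_graded 𝒜⟩
  · exact ⟨_, (h.card_lt_of_subgee hS).le, h.VSmon_mem hS⟩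
  · exact ⟨_, Nat.sub_le _ _, h.W_mem S hS⟩

theorem list_prod_posBasis_eq_zero_of_inr_mem {L : List (PosIndex 𝒢)}
    {S : {S : Finset ℕ+ // Subgee 𝒢 S}} (hS : .inr S ∈ L)
    (hlen : 𝒢.sup Finset.card + 2 ≤ L.length) : (L.map (posBasis V W)).prod = 0 := by
  refine h.eq_zero_of_mem_of_lt ?_
    (SetLike.list_prod_map_mem_graded L _ _ fun i _ => h.posBasis_mem i)
  have hpos (l : List (PosIndex 𝒢)) : l.length ≤ (l.map (posDegree m)).sum := by
    rw [← List.length_map (f := posDegree m)]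
    refine List.length_le_sum_of_one_le _ fun k hk => ?_
    obtain ⟨i, -, rfl⟩ := List.mem_map.mp hk
    exact h.posDegree_pos i
  obtain ⟨s, t, rfl⟩ := List.append_of_mem hS
  have hW : m - 𝒢.sup Finset.card ≤ posDegree m (.inr S) :=
    Nat.sub_le_sub_left S.2.card_le_sup m
  have := h.sup_card_lt
  have := hpos s
  have := hpos t
  simp only [List.length_append, List.length_cons] at hlen
  simp only [List.map_append, List.map_cons, List.sum_append, List.sum_cons]
  omega

theorem list_prod_posBasis_eq_zero_of_forall_inr_notMem {L : List (PosIndex 𝒢)}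
    (hL : ∀ S, .inr S ∉ L) (hlen : 𝒢.sup Finset.card < L.length) :
    (L.map (posBasis V W)).prod = 0 := by
  have hinl : ∀ j ∈ L, ∃ S, j = .inl S := by
    rintro (S | S) hS
    exacts [⟨S, rfl⟩, absurd hS (hL S)]
  let idx : PosIndex 𝒢 → List ℕ+ := Sum.elim (fun S => S.1.sort (· ≤ ·)) fun _ => []
  have hprod : (L.map (posBasis V W)).prod = ((L.flatMap idx).map V).prod := by
    rw [List.flatMap, List.map_flatten, List.prod_flatten, List.map_map, List.map_map]
    refine congrArg _ (List.map_congr_left fun j hj => ?_)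
    obtain ⟨S, rfl⟩ := hinl j hj
    rfl
  rw [hprod]
  refine h.list_prod_V_eq_zero (fun i hi => ?_) (hlen.trans_le ?_)
  · obtain ⟨j, hj, hij⟩ := List.mem_flatMap.mp hi
    obtain ⟨⟨S, hS, _⟩, rfl⟩ := hinl j hj
    exact mem_bra.mp (hS.subset_bra h.gee_sub ((Finset.mem_sort _).mp hij))
  · rw [List.length_flatMap, ← List.length_map (f := fun i => (idx i).length)]
    refine List.length_le_sum_of_one_le _ fun k hk => ?_
    obtain ⟨j, hj, rfl⟩ := List.mem_map.mp hk
    obtain ⟨⟨S, -, hne⟩, rfl⟩ := hinl j hj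
    simpa [idx] using hne.card_pos

theorem list_prod_posBasis_eq_zero {L : List (PosIndex 𝒢)}
    (hlen : 𝒢.sup Finset.card + 2 ≤ L.length) : (L.map (posBasis V W)).prod = 0 := by
  by_cases hW : ∃ S, .inr S ∈ L
  · obtain ⟨S, hS⟩ := hW
    exact h.list_prod_posBasis_eq_zero_of_inr_mem hS hlen
  · exact h.list_prod_posBasis_eq_zero_of_forall_inr_notMem (not_exists.mp hW) (by omega)

theorem span_range_posBasis_pow :
    span ℚ (Set.range (posBasis V W : PosIndex 𝒢 → R)) ^ (𝒢.sup Finset.card + 2) = ⊥ := by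
  rw [span_pow, span_eq_bot]
  intro x hx
  obtain ⟨f, rfl⟩ := Set.mem_pow.mp hx
  choose g hg using fun k => (f k).2
  have hf : List.ofFn (fun k => (f k : R)) = (List.ofFn g).map (posBasis V W) := by
    simp [List.map_ofFn, Function.comp_def, hg]
  rw [hf]
  exact h.list_prod_posBasis_eq_zero (by simp)

end IsPolygonAlgebra

/-- Upper bound for the zero-divisor-cup-length of an algebra of type `(𝒢, m, n)`:
every nonzero product of zero divisors in `R ⊗̂ R` has at most `2s + 2` factors, i.e.
`zcl(R) ≤ 2s + 2`, where `s` is the maximal cardinality of a gee. -/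
theorem stmt_7 (n m : ℕ) (𝒢 : Finset (Finset ℕ+))
    (R : Type) [Ring R] [Algebra ℚ R] [FiniteDimensional ℚ R]
    (𝒜 : ℕ → Submodule ℚ R) [GradedAlgebra 𝒜] (V : ℕ+ → R) (W : Finset ℕ+ → R)
    (h : IsPolygonAlgebra n m 𝒢 R 𝒜 V W) :
    ∀ j ∈ zclSet 𝒜, j ≤ 2 * 𝒢.sup Finset.card + 2 := by
  rintro j ⟨L, rfl, hL, hne⟩
  by_contra hlen
  refine hne (list_prod_eq_zero_of_forall_muMap_eq_zero ?_ h.span_insert_one_range_posBasis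
    h.span_range_posBasis_pow hL (by omega))
  rintro _ ⟨i, rfl⟩
  exact ⟨_, h.posDegree_pos i, h.posBasis_mem i⟩
end

section
/- Let R be an algebra of type (𝒢, m, n) with no exotic products. Let S and T be disjoint finite sets of positive integers and k a positive integer with k ∉ S ∪ T, such that S ∪ {k} and T are subgees. Then for every integer e, in R ⊗̂ R one has (V_k⊗1 − 1⊗V_k) · (W_{S∪{k}} ⊗ W_T + (−1)^e W_T ⊗ W_{S∪{k}}) = (−1)^{ρ_k(S)} (W_S ⊗ W_T + (−1)^{e + (m−|T|) + 1} W_T ⊗ W_S), where ρ_k(S) = #{t ∈ S : t > k}. -/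
open scoped TensorProduct

/-!
Since `ū = u ⊗ 1 − 1 ⊗ u` with `u` of degree one, multiplying `ū` into `a ⊗ b` with `a` of degree
`i` gives `ua ⊗ b − (−1)^i a ⊗ ub` (the Koszul sign from moving `u` past `a`). With no exotic
products, `V_k W_{S∪{k}} = (−1)^{ρ_k(S)} W_S` and `V_k W_T = 0` because `k ∉ T`, so two of the
four terms vanish; the remaining sign is `(−1)^{|W_T|} = (−1)^{m−|T|}`.
-/

section GradedTensor

variable {R : Type} [Ring R] [Algebra ℚ R] (𝒜 : ℕ → Submodule ℚ R) [GradedAlgebra 𝒜]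

theorem tm_smul_left (c : ℚ) (x y : R) : tm 𝒜 (c • x) y = c • tm 𝒜 x y := by
  rw [tm, ← TensorProduct.smul_tmul', map_smul, tm]

theorem tm_smul_right (c : ℚ) (x y : R) : tm 𝒜 x (c • y) = c • tm 𝒜 x y := by
  rw [tm, TensorProduct.tmul_smul, map_smul, tm]

theorem tm_zero_left (y : R) : tm 𝒜 0 y = 0 := by
  rw [tm, TensorProduct.zero_tmul, map_zero]

theorem tm_zero_right (x : R) : tm 𝒜 x 0 = 0 := by
  rw [tm, TensorProduct.tmul_zero, map_zero]

theorem tm_one_mul_tm (x : R) {i : ℕ} {a : R} (ha : a ∈ 𝒜 i) (b : R) :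
    tm 𝒜 x 1 * tm 𝒜 a b = tm 𝒜 (x * a) b :=
  GradedTensorProduct.tmul_one_mul_coe_tmul 𝒜 𝒜 x ⟨a, ha⟩ b

theorem tm_one_left_mul_tm {i j : ℕ} {v a : R} (hv : v ∈ 𝒜 j) (ha : a ∈ 𝒜 i) (b : R) :
    tm 𝒜 1 v * tm 𝒜 a b = (-1 : ℚ) ^ (j * i) • tm 𝒜 a (v * b) := by
  have h := GradedTensorProduct.tmul_coe_mul_coe_tmul 𝒜 𝒜 (1 : R) ⟨v, hv⟩ ⟨a, ha⟩ b
  rw [one_mul] at h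
  rw [tm, tm, h, Units.smul_def, ← Int.cast_smul_eq_zsmul ℚ, tm]
  norm_num

theorem ubar_mul_tm {i : ℕ} {u a : R} (hu : u ∈ 𝒜 1) (ha : a ∈ 𝒜 i) (b : R) :
    ubar 𝒜 u * tm 𝒜 a b = tm 𝒜 (u * a) b - (-1 : ℚ) ^ i • tm 𝒜 a (u * b) := by
  rw [ubar, sub_mul, tm_one_mul_tm 𝒜 u ha, tm_one_left_mul_tm 𝒜 hu ha, one_mul]

end GradedTensor

theorem Subgee.le_of_mem {𝒢 : Finset (Finset ℕ+)} {S : Finset ℕ+} (hS : Subgee 𝒢 S) {N : ℕ}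
    (h𝒢 : ∀ G ∈ 𝒢, G ⊆ bra N) {k : ℕ+} (hk : k ∈ S) : (k : ℕ) ≤ N := by
  obtain ⟨G, hG, T', hT'G, hST'⟩ := hS
  obtain ⟨t, htT', hkt⟩ := Multiset.exists_mem_of_rel_of_mem hST' hk
  obtain ⟨j, hj, rfl⟩ := Finset.mem_image.mp (h𝒢 G hG (Multiset.mem_of_le hT'G htT'))
  have hkj : (k : ℕ) ≤ j + 1 := hkt
  have hjN : j < N := Finset.mem_range.mp hj
  omega

theorem Subgee.card_le {𝒢 : Finset (Finset ℕ+)} {S : Finset ℕ+} (hS : Subgee 𝒢 S) {c : ℕ}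
    (h𝒢 : ∀ G ∈ 𝒢, G.card ≤ c) : S.card ≤ c := by
  obtain ⟨G, hG, T', hT'G, hST'⟩ := hS
  calc S.card = Multiset.card T' := Multiset.card_eq_card_of_rel hST'
    _ ≤ G.card := Multiset.card_le_card hT'G
    _ ≤ c := h𝒢 G hG

theorem stmt_14_general (n m : ℕ) (𝒢 : Finset (Finset ℕ+))
    (R : Type) [Ring R] [Algebra ℚ R] [FiniteDimensional ℚ R]
    (𝒜 : ℕ → Submodule ℚ R) [GradedAlgebra 𝒜] (V : ℕ+ → R) (W : Finset ℕ+ → R)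
    (h : IsPolygonAlgebra n m 𝒢 R 𝒜 V W)
    (hne : NoExoticProducts n 𝒢 V W)
    (S T : Finset ℕ+) (k : ℕ+) (hkS : k ∉ S) (hkT : k ∉ T)
    (hSk : Subgee 𝒢 (insert k S)) (hT : Subgee 𝒢 T) (e : ℤ) :
    ubar 𝒜 (V k) *
      (tm 𝒜 (W (insert k S)) (W T) + ((-1 : ℚ) ^ e) • tm 𝒜 (W T) (W (insert k S))) =
    ((-1 : ℚ) ^ (rho k S)) •
      (tm 𝒜 (W S) (W T) +
        ((-1 : ℚ) ^ (e + ((m : ℤ) - (T.card : ℤ)) + 1)) • tm 𝒜 (W T) (W S)) := by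
  have hkn : (k : ℕ) ≤ n - 1 := hSk.le_of_mem h.gee_sub (Finset.mem_insert_self k S)
  have hTm : T.card ≤ m := (hT.card_le h.gee_card).trans (Nat.sub_le m 1)
  have hVk := h.V_mem k hkn
  have hVkSk : V k * W (insert k S) = (-1 : ℚ) ^ rho k S • W S := by
    rw [(hne.2 k hkn _ hSk).1 (Finset.mem_insert_self k S), Finset.erase_insert hkS]
  have hVkT : V k * W T = 0 := (hne.2 k hkn T hT).2 hkT
  rw [mul_add, mul_smul_comm, ubar_mul_tm 𝒜 hVk (h.W_mem _ hSk),
    ubar_mul_tm 𝒜 hVk (h.W_mem _ hT), hVkSk, hVkT, tm_smul_left, tm_smul_right, tm_zero_left,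
    tm_zero_right, ← Nat.cast_sub hTm, zpow_add_one₀ (by norm_num), zpow_add₀ (by norm_num),
    zpow_natCast]
  module

/-- In an algebra of type `(𝒢, m, n)` with no exotic products, if `S` and `T` are disjoint,
`k ∉ S ∪ T`, and `S ∪ {k}` and `T` are subgees, then for every integer `e`, in `R ⊗̂ R`:
`(V_k⊗1 − 1⊗V_k)(W_{S∪{k}} ⊗ W_T + (−1)^e W_T ⊗ W_{S∪{k}})
  = (−1)^{ρ_k(S)}(W_S ⊗ W_T + (−1)^{e+(m−|T|)+1} W_T ⊗ W_S)`. -/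
theorem stmt_14 (n m : ℕ) (𝒢 : Finset (Finset ℕ+))
    (R : Type) [Ring R] [Algebra ℚ R] [FiniteDimensional ℚ R]
    (𝒜 : ℕ → Submodule ℚ R) [GradedAlgebra 𝒜] (V : ℕ+ → R) (W : Finset ℕ+ → R)
    (h : IsPolygonAlgebra n m 𝒢 R 𝒜 V W)
    (hne : NoExoticProducts n 𝒢 V W)
    (S T : Finset ℕ+) (hST : Disjoint S T) (k : ℕ+) (hkS : k ∉ S) (hkT : k ∉ T)
    (hSk : Subgee 𝒢 (insert k S)) (hT : Subgee 𝒢 T) (e : ℤ) :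
    ubar 𝒜 (V k) *
      (tm 𝒜 (W (insert k S)) (W T) + ((-1 : ℚ) ^ e) • tm 𝒜 (W T) (W (insert k S))) =
    ((-1 : ℚ) ^ (rho k S)) •
      (tm 𝒜 (W S) (W T) +
        ((-1 : ℚ) ^ (e + ((m : ℤ) - (T.card : ℤ)) + 1)) • tm 𝒜 (W T) (W S)) :=
  stmt_14_general n m 𝒢 R 𝒜 V W h hne S T k hkS hkT hSk hT e
end
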